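/- For 1/3 < r < 1 and all real x, the Schwarzian derivative of R̃, namely R̃'''(x)/R̃'(x) − (3/2)(R̃''(x)/R̃'(x))², is strictly negative (wherever R̃'(x) ≠ 0). Equivalently it equals r(1−r²)H(r, cos x) / ((1 − 4r·cos x + 3r²)²(1 − 2r·cos x + r²)²) with H(r, cos x) < 0. -/

import Mathlib

open Real

/-- The incident angle function of the off-center reflection. -/
noncomputable def iota (r x : ℝ) : ℝ :=
  Complex.arg ((Real.cos x - r : ℝ) + (Real.sin x : ℝ) * Complex.I) - x

/-- Lift of the off-center reflection taking 0 to Ω. -/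
noncomputable def Rt (r Ω x : ℝ) : ℝ := x + Ω - 2 * iota r x
/-- Numerator factor in the Schwarzian derivative of the off-center reflection. -/
noncomputable def H (r y : ℝ) : ℝ :=
  -(14 * r + 18 * r ^ 3) + (2 + 40 * r ^ 2 + 6 * r ^ 4) * y
    + 2 * r * (1 - r ^ 2) * y ^ 2 - 16 * r ^ 2 * y ^ 3

/-!
Since `ι r y + y = arg (e^{iy} - r)`, we have `R̃ y = 3y + Ω - 2 arg (e^{iy} - r)`. Where
`cos y ≠ -1` the point `e^{iy} - r` lies in the slit plane, so `R̃` is smooth there with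
derivatives rational in `cos y, sin y`; at `cos x = -1` the argument jumps from `π` to `-π`, so `R̃`
is not even continuous and `deriv` returns its junk value `0`, which `hne` excludes. Substituting
the closed forms gives the Schwarzian as `r(1 - r²) H(r, cos x) / ((1 - 4r cos x + 3r²)² D²)`, and
`H(r, ·) < 0` on `[-1, 1]` once `r > 1/3`.
-/

open Filter Topology

section IteratedDeriv

variable {𝕜 F : Type*} [NontriviallyNormedField 𝕜] [NormedAddCommGroup F] [NormedSpace 𝕜 F]
  {f f₁ f₂ : 𝕜 → F} {x : 𝕜} {c : F}

theorem iteratedDeriv_two_eq_of_eventually_hasDerivAt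
    (h₁ : ∀ᶠ y in 𝓝 x, HasDerivAt f (f₁ y) y) (h₂ : HasDerivAt f₁ c x) :
    iteratedDeriv 2 f x = c := by
  have h : deriv f =ᶠ[𝓝 x] f₁ := h₁.mono fun y hy => hy.deriv
  rw [iteratedDeriv_succ, iteratedDeriv_one, h.deriv_eq, h₂.deriv]

theorem iteratedDeriv_three_eq_of_eventually_hasDerivAt
    (h₁ : ∀ᶠ y in 𝓝 x, HasDerivAt f (f₁ y) y) (h₂ : ∀ᶠ y in 𝓝 x, HasDerivAt f₁ (f₂ y) y)
    (h₃ : HasDerivAt f₂ c x) :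
    iteratedDeriv 3 f x = c := by
  have h : iteratedDeriv 2 f =ᶠ[𝓝 x] f₂ := (h₁.eventually_nhds.and h₂).mono fun y hy =>
    iteratedDeriv_two_eq_of_eventually_hasDerivAt hy.1 hy.2
  rw [iteratedDeriv_succ, h.deriv_eq, h₃.deriv]

end IteratedDeriv

noncomputable def schwarzian {𝕜 : Type*} [NontriviallyNormedField 𝕜] (f : 𝕜 → 𝕜) (x : 𝕜) : 𝕜 :=
  iteratedDeriv 3 f x / deriv f x - 3 / 2 * (iteratedDeriv 2 f x / deriv f x) ^ 2

/-- The point `e^{ix} - r`. -/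
noncomputable def offCenterPoint (r x : ℝ) : ℂ :=
  (Real.cos x - r : ℝ) + (Real.sin x : ℝ) * Complex.I

noncomputable def D (r x : ℝ) : ℝ := 1 - 2 * r * cos x + r ^ 2

section OffCenterPoint

variable {r x : ℝ}

theorem offCenterPoint_re : (offCenterPoint r x).re = cos x - r := by
  simp [offCenterPoint, Complex.cos_ofReal_re]

theorem offCenterPoint_im : (offCenterPoint r x).im = sin x := by
  simp [offCenterPoint, Complex.sin_ofReal_re]

theorem normSq_offCenterPoint : Complex.normSq (offCenterPoint r x) = D r x := by
  rw [Complex.normSq_apply, offCenterPoint_re, offCenterPoint_im, D]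
  linear_combination sin_sq_add_cos_sq x

theorem continuous_offCenterPoint : Continuous (offCenterPoint r) := by
  unfold offCenterPoint
  fun_prop

theorem hasDerivAt_offCenterPoint :
    HasDerivAt (offCenterPoint r) ((-sin x : ℝ) + (cos x : ℝ) * Complex.I) x :=
  ((hasDerivAt_cos x).sub_const r).ofReal_comp.add
    ((hasDerivAt_sin x).ofReal_comp.mul_const Complex.I)

theorem offCenterPoint_mem_slitPlane (hr : r < 1) (hx : cos x ≠ -1) :
    offCenterPoint r x ∈ Complex.slitPlane := by
  rw [Complex.mem_slitPlane_iff, offCenterPoint_re, offCenterPoint_im]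
  by_cases hs : sin x = 0
  · left
    have hc : cos x = 1 := (sin_eq_zero_iff_cos_eq.mp hs).resolve_right hx
    linarith
  · exact Or.inr hs

theorem hasDerivAt_arg_offCenterPoint (hr : r < 1) (hx : cos x ≠ -1) :
    HasDerivAt (fun y => (offCenterPoint r y).arg) ((1 - r * cos x) / D r x) x := by
  have h := (Complex.imCLM.hasFDerivAt.comp_hasDerivAt x
    (hasDerivAt_offCenterPoint.clog_real (offCenterPoint_mem_slitPlane hr hx)))
  simp only [Function.comp_def, Complex.imCLM_apply, Complex.log_im] at h
  refine h.congr_deriv ?_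
  rw [Complex.div_im, normSq_offCenterPoint, offCenterPoint_re, offCenterPoint_im, ← sub_div]
  congr 1
  simp only [Complex.add_im, Complex.add_re, Complex.mul_im, Complex.mul_re, Complex.ofReal_re,
    Complex.ofReal_im, Complex.I_re, Complex.I_im]
  linear_combination sin_sq_add_cos_sq x

theorem tendsto_arg_offCenterPoint_nhdsGT (hr : -1 < r) (hx : cos x = -1) :
    Tendsto (fun y => (offCenterPoint r y).arg) (𝓝[>] x) (𝓝 (-π)) := by
  have hs : sin x = 0 := sin_eq_zero_iff_cos_eq.mpr (Or.inr hx)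
  have hre : (offCenterPoint r x).re < 0 := by rw [offCenterPoint_re, hx]; linarith
  have him : (offCenterPoint r x).im = 0 := by rw [offCenterPoint_im, hs]
  have below : ∀ᶠ y in 𝓝[>] x, offCenterPoint r y ∈ {z : ℂ | z.im < 0} := by
    filter_upwards [Ioo_mem_nhdsGT (show x < x + π by linarith [pi_pos])] with y hy
    have hsin : sin y = -sin (y - x) := by
      conv_lhs => rw [← sub_add_cancel y x]
      rw [sin_add, hs, hx]
      ring
    rw [offCenterPoint_im, hsin, neg_lt_zero]
    exact sin_pos_of_pos_of_lt_pi (by linarith [hy.1]) (by linarith [hy.2])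
  exact (Complex.tendsto_arg_nhdsWithin_im_neg_of_re_neg_of_im_zero hre him).comp
    (tendsto_nhdsWithin_iff.mpr ⟨continuous_offCenterPoint.continuousWithinAt, below⟩)

end OffCenterPoint

theorem Rt_eq_arg (r Ω y : ℝ) : Rt r Ω y = 3 * y + Ω - 2 * (offCenterPoint r y).arg := by
  simp only [Rt, iota, offCenterPoint]
  ring

theorem not_continuousAt_Rt {r Ω x : ℝ} (hr : -1 < r) (hx : cos x = -1) :
    ¬ContinuousAt (Rt r Ω) x := by
  intro hcont
  have harg : ContinuousAt (fun y => (offCenterPoint r y).arg) x := by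
    have h : ContinuousAt (fun y => (3 * y + Ω - Rt r Ω y) / 2) x := by fun_prop
    convert h using 2 with y
    rw [Rt_eq_arg]
    ring
  have hval : (offCenterPoint r x).arg = π := by
    rw [← Complex.re_add_im (offCenterPoint r x), offCenterPoint_re, offCenterPoint_im,
      sin_eq_zero_iff_cos_eq.mpr (Or.inr hx), hx]
    simpa using Complex.arg_ofReal_of_neg (show -1 - r < 0 by linarith)
  have := tendsto_nhds_unique (hval ▸ harg.tendsto.mono_left nhdsWithin_le_nhds)
    (tendsto_arg_offCenterPoint_nhdsGT hr hx)
  linarith [pi_pos]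

/-- Closed forms of `R̃'`, `R̃''`, `R̃'''`; they do not depend on `Ω`. -/
noncomputable def Rt' (r x : ℝ) : ℝ := (1 - 4 * r * cos x + 3 * r ^ 2) / D r x

noncomputable def Rt'' (r x : ℝ) : ℝ := 2 * r * (1 - r ^ 2) * sin x / D r x ^ 2

noncomputable def Rt''' (r x : ℝ) : ℝ :=
  2 * r * (1 - r ^ 2) * ((1 + r ^ 2) * cos x - 2 * r * (1 + sin x ^ 2)) / D r x ^ 3

section Derivatives

variable {r : ℝ} (Ω : ℝ) {x : ℝ}

theorem D_pos (hr : |r| < 1) (x : ℝ) : 0 < D r x := by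
  have hrc : r * cos x ≤ |r| := (le_abs_self _).trans <| by
    rw [abs_mul]; exact mul_le_of_le_one_right (abs_nonneg r) (abs_cos_le_one x)
  have : 0 < (1 - |r|) ^ 2 := by nlinarith [abs_nonneg r]
  rw [D]; nlinarith [sq_abs r]

theorem hasDerivAt_D : HasDerivAt (D r) (2 * r * sin x) x :=
  ((((hasDerivAt_cos x).const_mul (2 * r)).const_sub 1).add_const (r ^ 2)).congr_deriv (by ring)

theorem hasDerivAt_Rt (hr : |r| < 1) (hx : cos x ≠ -1) : HasDerivAt (Rt r Ω) (Rt' r x) x := by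
  rw [show Rt r Ω = _ from funext (Rt_eq_arg r Ω)]
  refine ((((hasDerivAt_id' x).const_mul 3).add_const Ω).sub
    ((hasDerivAt_arg_offCenterPoint (abs_lt.mp hr).2 hx).const_mul 2)).congr_deriv ?_
  have hD := (D_pos hr x).ne'
  rw [Rt']
  field_simp
  rw [D]
  ring

theorem hasDerivAt_Rt' (hr : |r| < 1) : HasDerivAt (Rt' r) (Rt'' r x) x := by
  have hD := (D_pos hr x).ne'
  have h := ((((hasDerivAt_cos x).const_mul (4 * r)).const_sub 1).add_const (3 * r ^ 2)).fun_div
    hasDerivAt_D hD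
  refine h.congr_deriv ?_
  rw [Rt'']
  field_simp
  rw [D]
  ring

theorem hasDerivAt_Rt'' (hr : |r| < 1) : HasDerivAt (Rt'' r) (Rt''' r x) x := by
  have hD := (D_pos hr x).ne'
  have h := ((hasDerivAt_sin x).const_mul (2 * r * (1 - r ^ 2))).fun_div (hasDerivAt_D.fun_pow 2)
    (pow_ne_zero 2 hD)
  refine h.congr_deriv ?_
  rw [Rt''']
  field_simp
  rw [D]
  linear_combination -2 * r ^ 2 * (1 - r ^ 2) * (1 - 2 * r * cos x + r ^ 2) * sin_sq_add_cos_sq x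

end Derivatives

/-- When `1 - 4 r cos x + 3 r² = 0`, both sides are `0` by the convention `a / 0 = 0`. -/
theorem Rt'''_div_sub_sq_eq {r x : ℝ} (hr : |r| < 1) :
    Rt''' r x / Rt' r x - 3 / 2 * (Rt'' r x / Rt' r x) ^ 2 =
      r * (1 - r ^ 2) * H r (cos x) / ((1 - 4 * r * cos x + 3 * r ^ 2) ^ 2 * D r x ^ 2) := by
  have hD := (D_pos hr x).ne'
  rw [Rt', Rt'', Rt''', H]
  field_simp
  congr 1
  linear_combination -2 * r ^ 2 * (1 - r ^ 2) * (5 - 8 * r * cos x + 3 * r ^ 2) *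
    sin_sq_add_cos_sq x

theorem schwarzian_Rt {r : ℝ} (Ω : ℝ) {x : ℝ} (hr : |r| < 1) (hx : cos x ≠ -1) :
    schwarzian (Rt r Ω) x =
      r * (1 - r ^ 2) * H r (cos x) / ((1 - 4 * r * cos x + 3 * r ^ 2) ^ 2 * D r x ^ 2) := by
  have h₁ : ∀ᶠ y in 𝓝 x, HasDerivAt (Rt r Ω) (Rt' r y) y :=
    (continuous_cos.continuousAt.eventually_ne hx).mono fun y hy => hasDerivAt_Rt Ω hr hy
  have h₂ : ∀ᶠ y in 𝓝 x, HasDerivAt (Rt' r) (Rt'' r y) y := .of_forall fun y => hasDerivAt_Rt' hr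
  rw [schwarzian, h₁.self_of_nhds.deriv,
    iteratedDeriv_two_eq_of_eventually_hasDerivAt h₁ (hasDerivAt_Rt' hr),
    iteratedDeriv_three_eq_of_eventually_hasDerivAt h₁ h₂ (hasDerivAt_Rt'' hr),
    Rt'''_div_sub_sq_eq hr]

/-- `H(r, 1) = 2(1 - r)³(1 - 3r)`, and `H(r, 1) - H(r, y) = (1 - y) Q(y)` with `Q` concave in `y`
and nonnegative at `y = ±1`; interpolating `Q` linearly between `±1` gives `key`. -/
theorem H_neg {r y : ℝ} (hr₀ : 1 / 3 < r) (hr₁ : r < 1) (hy₀ : -1 ≤ y) (hy₁ : y ≤ 1) :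
    H r y < 0 := by
  have key : H r y = -2 * (1 - r) ^ 3 * (3 * r - 1) - (1 + 12 * r ^ 2 + 3 * r ^ 4) * (1 - y) ^ 2
      - (1 - r) ^ 2 * (1 + r) * (1 + 3 * r) * ((1 - y) * (1 + y))
      - 16 * r ^ 2 * ((1 - y) ^ 2 * (1 + y)) := by
    rw [H]; ring
  have : 0 < r := by linarith
  have h₁ : 0 < (1 - r) ^ 3 * (3 * r - 1) := mul_pos (pow_pos (by linarith) 3) (by linarith)
  have h₂ : 0 ≤ (1 + 12 * r ^ 2 + 3 * r ^ 4) * (1 - y) ^ 2 := by positivity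
  have h₃ : 0 ≤ (1 - r) ^ 2 * (1 + r) * (1 + 3 * r) * ((1 - y) * (1 + y)) := by
    have : 0 ≤ (1 - y) * (1 + y) := mul_nonneg (by linarith) (by linarith)
    positivity
  have h₄ : 0 ≤ 16 * r ^ 2 * ((1 - y) ^ 2 * (1 + y)) := by
    have : 0 ≤ 1 + y := by linarith
    positivity
  linarith

theorem stmt_6 (r : ℝ) (hr0 : 1 / 3 < r) (hr1 : r < 1) (Ω x : ℝ)
    (hne : deriv (Rt r Ω) x ≠ 0) :
    iteratedDeriv 3 (Rt r Ω) x / deriv (Rt r Ω) x -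
        3 / 2 * (iteratedDeriv 2 (Rt r Ω) x / deriv (Rt r Ω) x) ^ 2 < 0 ∧
    iteratedDeriv 3 (Rt r Ω) x / deriv (Rt r Ω) x -
        3 / 2 * (iteratedDeriv 2 (Rt r Ω) x / deriv (Rt r Ω) x) ^ 2 =
      r * (1 - r ^ 2) * H r (Real.cos x) /
        ((1 - 4 * r * Real.cos x + 3 * r ^ 2) ^ 2 *
          (1 - 2 * r * Real.cos x + r ^ 2) ^ 2) ∧
    H r (Real.cos x) < 0 := by
  have hr : |r| < 1 := abs_lt.mpr ⟨by linarith, hr1⟩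
  have hx : cos x ≠ -1 := fun hx => hne <| deriv_zero_of_not_differentiableAt fun h =>
    not_continuousAt_Rt (by linarith) hx h.continuousAt
  have hA : 1 - 4 * r * cos x + 3 * r ^ 2 ≠ 0 := fun hA => hne <| by
    rw [(hasDerivAt_Rt Ω hr hx).deriv, Rt', hA, zero_div]
  have hH := H_neg hr0 hr1 (neg_one_le_cos x) (cos_le_one x)
  have hS : schwarzian (Rt r Ω) x = _ := schwarzian_Rt Ω hr hx
  refine ⟨?_, hS, hH⟩
  show schwarzian (Rt r Ω) x < 0
  rw [hS]
  have hrr : 0 < r * (1 - r ^ 2) := mul_pos (by linarith) (by nlinarith)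
  exact div_neg_of_neg_of_pos (mul_neg_of_pos_of_neg hrr hH)
    (mul_pos (sq_pos_of_ne_zero hA) (pow_pos (D_pos hr x) 2))
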